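/- Let m ≥ 1 be an integer and let c₀₁, c₀₂ ∈ Fin m be arbitrary baseline labels. Then the function α ↦ ∑_{(u,v,w,z) ∈ (Fin m)⁴, u ≠ v, w ≠ z} q_α(u, v, w, z; c₀₁, c₀₂) tends to (m-1)²/m² as α → ∞ (along Filter.atTop). In words: whatever the baseline labels, the probability that the two units fail to co-cluster in both views tends to (m-1)²/m² as α → ∞. -/

import Mathlib

/-!
As `α → ∞` each unit contributes a factor `(α + x)(α + y) / ((α m + 2)(α m + 1)) → 1 / m²`
to `q_α`, whatever the type of its label triple, so every summand tends to `1 / m⁴`. There are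
`(m (m - 1))²` index tuples with `u ≠ v` and `w ≠ z`, which gives `(m - 1)² / m²`.
-/

/-- Indicator that the triple `(a, b, c)` has all three entries equal. -/
def isA {m : ℕ} (a b c : Fin m) : ℕ :=
  if a = b ∧ b = c then 1 else 0

/-- Indicator that the triple `(a, b, c)` has three pairwise distinct entries. -/
def isB {m : ℕ} (a b c : Fin m) : ℕ :=
  if a ≠ b ∧ b ≠ c ∧ a ≠ c then 1 else 0

/-- Indicator that the triple `(a, b, c)` has exactly two equal entries. -/
def isC {m : ℕ} (a b c : Fin m) : ℕ :=
  if (a = b ∧ b ≠ c) ∨ (b ≠ c ∧ a = c) ∨ (a ≠ b ∧ b = c) then 1 else 0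

/-- The conditional probability `q_α(c₁₁, c₁₂, c₂₁, c₂₂; c₀₁, c₀₂)` of the view
labels of two units in two views given their baseline labels (Proposition 1 of
the paper, `n = J = 2` case).  The triple of unit `i` is `(c₀ᵢ, c₁ᵢ, c₂ᵢ)`. -/
noncomputable def q (m : ℕ) (α : ℝ) (c11 c12 c21 c22 c01 c02 : Fin m) : ℝ :=
  ((α + 2) * (α + 1)) ^ (isA c01 c11 c21 + isA c02 c12 c22) *
    (α ^ 2) ^ (isB c01 c11 c21 + isB c02 c12 c22) *
    ((α + 1) * α) ^ (isC c01 c11 c21 + isC c02 c12 c22) /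
      ((α * m + 2) * (α * m + 1)) ^ 2

open Filter Topology Finset

lemma tendsto_add_div_mul_add_atTop (M x y : ℝ) (hM : M ≠ 0) :
    Tendsto (fun α : ℝ => (α + x) / (α * M + y)) atTop (𝓝 (1 / M)) := by
  have hnum : Tendsto (fun α : ℝ => 1 + x * α⁻¹) atTop (𝓝 1) := by
    simpa using tendsto_const_nhds.add (tendsto_inv_atTop_zero.const_mul x)
  have hden : Tendsto (fun α : ℝ => M + y * α⁻¹) atTop (𝓝 M) := by
    simpa using tendsto_const_nhds.add (tendsto_inv_atTop_zero.const_mul y)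
  refine (hnum.div hden hM).congr' ?_
  filter_upwards [eventually_ne_atTop 0] with α hα
  rw [Pi.div_apply]
  field_simp

lemma tendsto_mul_add_div_mul_add_atTop (M x y u v : ℝ) (hM : M ≠ 0) :
    Tendsto (fun α : ℝ => (α + x) * (α + y) / ((α * M + u) * (α * M + v))) atTop
      (𝓝 (1 / M ^ 2)) := by
  have h := (tendsto_add_div_mul_add_atTop M x u hM).mul
    (tendsto_add_div_mul_add_atTop M y v hM)
  simpa only [div_mul_div_comm, ← sq, one_div_pow] using h

lemma isA_add_isB_add_isC {m : ℕ} (a b c : Fin m) : isA a b c + isB a b c + isC a b c = 1 := by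
  unfold isA isB isC
  split_ifs <;> simp_all

noncomputable def unitFactor (m : ℕ) (α : ℝ) (a b c : Fin m) : ℝ :=
  ((α + 2) * (α + 1)) ^ isA a b c * (α ^ 2) ^ isB a b c * ((α + 1) * α) ^ isC a b c /
    ((α * m + 2) * (α * m + 1))

lemma q_eq_unitFactor_mul_unitFactor (m : ℕ) (α : ℝ) (c11 c12 c21 c22 c01 c02 : Fin m) :
    q m α c11 c12 c21 c22 c01 c02 = unitFactor m α c01 c11 c21 * unitFactor m α c02 c12 c22 := by
  simp only [q, unitFactor, pow_add, div_eq_mul_inv, sq, mul_inv]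
  ring

lemma tendsto_unitFactor_atTop {m : ℕ} (hm : 1 ≤ m) (a b c : Fin m) :
    Tendsto (fun α : ℝ => unitFactor m α a b c) atTop (𝓝 (1 / (m : ℝ) ^ 2)) := by
  have hM : (m : ℝ) ≠ 0 := by positivity
  have hsum := isA_add_isB_add_isC a b c
  obtain ⟨hA, hB, hC⟩ | ⟨hA, hB, hC⟩ | ⟨hA, hB, hC⟩ :
      (isA a b c = 1 ∧ isB a b c = 0 ∧ isC a b c = 0) ∨
      (isA a b c = 0 ∧ isB a b c = 1 ∧ isC a b c = 0) ∨
      (isA a b c = 0 ∧ isB a b c = 0 ∧ isC a b c = 1) := by omega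
  all_goals
    simp only [unitFactor, hA, hB, hC, pow_zero, pow_one, one_mul, mul_one]
  · exact tendsto_mul_add_div_mul_add_atTop _ 2 1 2 1 hM
  · simpa [sq] using tendsto_mul_add_div_mul_add_atTop _ 0 0 2 1 hM
  · simpa using tendsto_mul_add_div_mul_add_atTop _ 1 0 2 1 hM

lemma card_filter_ne_and_ne (m : ℕ) :
    #(univ.filter fun p : Fin m × Fin m × Fin m × Fin m => p.1 ≠ p.2.1 ∧ p.2.2.1 ≠ p.2.2.2) =
      (m * m - m) ^ 2 := by
  have h : #(univ.filter fun p : Fin m × Fin m × Fin m × Fin m =>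
      p.1 ≠ p.2.1 ∧ p.2.2.1 ≠ p.2.2.2) = #((univ : Finset (Fin m)).offDiag ×ˢ univ.offDiag) :=
    card_bij' (fun p _ => ((p.1, p.2.1), (p.2.2.1, p.2.2.2)))
      (fun p _ => (p.1.1, p.1.2, p.2.1, p.2.2)) (by simp) (by simp) (by simp) (by simp)
  rw [h, card_product, offDiag_card, card_univ, Fintype.card_fin, sq]

/-- Corollary 1: whatever the baseline labels, the probability of failing to
co-cluster in both views tends to `(m-1)²/m²` as `α → ∞`. -/
theorem no_cocluster_tendsto_alpha_infty (m : ℕ) (hm : 1 ≤ m)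
    (c01 c02 : Fin m) :
    Filter.Tendsto (fun α : ℝ =>
        ∑ p ∈ Finset.univ.filter
            (fun p : Fin m × Fin m × Fin m × Fin m =>
              p.1 ≠ p.2.1 ∧ p.2.2.1 ≠ p.2.2.2),
          q m α p.1 p.2.1 p.2.2.1 p.2.2.2 c01 c02)
      Filter.atTop (nhds (((m : ℝ) - 1) ^ 2 / (m : ℝ) ^ 2)) := by
  simp only [q_eq_unitFactor_mul_unitFactor]
  convert tendsto_finsetSum _ fun (p : Fin m × Fin m × Fin m × Fin m) _ =>
    (tendsto_unitFactor_atTop hm c01 p.1 p.2.2.1).mul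
      (tendsto_unitFactor_atTop hm c02 p.2.1 p.2.2.2) using 2
  rw [sum_const, card_filter_ne_and_ne, nsmul_eq_mul, Nat.cast_pow,
    Nat.cast_sub (Nat.le_mul_of_pos_left m hm), Nat.cast_mul]
  have hM : (m : ℝ) ≠ 0 := by positivity
  field_simp
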